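/- arXiv:1901.05690 — 2 statements merged into one kernel-verified Lean document; each statement's English description precedes it below -/
import Mathlib

section
/- Let X be a finite connected pre-ordered set with at least 2 elements, R a 2-torsion free commutative ring with unity, and L a Lie triple derivation of I(X,R). Write L(e_{ij}) = Σ C^{ij}_{xy} e_{xy}. Then for every i ∈ X, L(e_{ii}) = Σ_{x<i} C^{ii}_{xi} e_{xi} + Σ_{x∈X} C^{ii}_{xx} e_{xx} + Σ_{y>i} C^{ii}_{iy} e_{iy}; that is, C^{ii}_{xy} = 0 whenever x ≠ i ≠ y and x < y. -/
open IncidenceAlgebra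
open scoped Classical

variable {R X : Type*}

/-- The matrix unit `e_{x y}` of the incidence algebra (zero if `¬ x ≤ y`). -/
noncomputable def matrixUnit [CommRing R] [Preorder X] [DecidableEq X] (x y : X) :
    IncidenceAlgebra R X :=
  ⟨fun u v => if u = x ∧ v = y ∧ x ≤ y then 1 else 0, fun a b hab => by
    split_ifs with h
    · exact absurd (by rw [h.1, h.2.1]; exact h.2.2) hab
    · rfl⟩

/-- The Lie bracket `[f,g] = fg - gf`. -/
def lieBr {A : Type*} [Ring A] (f g : A) : A := f * g - g * f

/-- `L` is a Lie triple derivation of the incidence algebra. -/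
def IsLieTripleDer [CommRing R] [Preorder X] [DecidableEq X] [LocallyFiniteOrder X]
    (L : IncidenceAlgebra R X →ₗ[R] IncidenceAlgebra R X) : Prop :=
  ∀ f g h : IncidenceAlgebra R X,
    L (lieBr (lieBr f g) h) =
      lieBr (lieBr (L f) g) h + lieBr (lieBr f (L g)) h + lieBr (lieBr f g) (L h)

/-- `X` is connected: any two points are joined by a chain of comparabilities. -/
def OrdConnected' (X : Type*) [Preorder X] : Prop :=
  ∀ x y : X, Relation.ReflTransGen (fun a b : X => a ≤ b ∨ b ≤ a) x y

/-- `R` is 2-torsion free. -/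
def TwoTorsionFree (R : Type*) [CommRing R] : Prop := ∀ r : R, r + r = 0 → r = 0

/-!
Since `x ≠ i`, the idempotents `e_xx` and `e_ii` are orthogonal, so `[[e_xx, e_ii], e_yy] = 0`.
Applying `L` and evaluating at `(x, y)`, the term `[[L e_xx, e_ii], e_yy]` vanishes there
because neither `x` nor `y` is `i`, and `[[e_xx, L e_ii], e_yy] (x, y) = L(e_ii)(x, y)`
because `x ≠ y`.
-/

section
variable [CommRing R] [Preorder X] [DecidableEq X]

lemma matrixUnit_self_apply (a u v : X) :
    (matrixUnit a a : IncidenceAlgebra R X) u v = if u = a ∧ v = a then 1 else 0 := by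
  simp [matrixUnit]

variable [LocallyFiniteOrder X]

lemma matrixUnit_self_mul_apply (a : X) (f : IncidenceAlgebra R X) (u v : X) :
    (matrixUnit a a * f : IncidenceAlgebra R X) u v = if u = a then f a v else 0 := by
  rcases eq_or_ne u a with rfl | hua
  · by_cases huv : u ≤ v
    · simp [matrixUnit_self_apply, huv]
    · simp [apply_eq_zero_of_not_le huv]
  · simp [matrixUnit_self_apply, hua]

lemma mul_matrixUnit_self_apply (a : X) (f : IncidenceAlgebra R X) (u v : X) :
    (f * matrixUnit a a : IncidenceAlgebra R X) u v = if v = a then f u a else 0 := by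
  rcases eq_or_ne v a with rfl | hva
  · by_cases huv : u ≤ v
    · simp [matrixUnit_self_apply, huv]
    · simp [apply_eq_zero_of_not_le huv]
  · simp [matrixUnit_self_apply, hva]

lemma lieBr_matrixUnit_self_apply (f : IncidenceAlgebra R X) (a u v : X) :
    lieBr f (matrixUnit a a) u v =
      (if v = a then f u a else 0) - if u = a then f a v else 0 := by
  rw [lieBr, IncidenceAlgebra.sub_apply, matrixUnit_self_mul_apply, mul_matrixUnit_self_apply]

lemma matrixUnit_self_lieBr_apply (f : IncidenceAlgebra R X) (a u v : X) :
    lieBr (matrixUnit a a) f u v =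
      (if u = a then f a v else 0) - if v = a then f u a else 0 := by
  rw [lieBr, IncidenceAlgebra.sub_apply, matrixUnit_self_mul_apply, mul_matrixUnit_self_apply]

lemma lieBr_matrixUnit_self_of_ne {a b : X} (hab : a ≠ b) :
    lieBr (matrixUnit a a) (matrixUnit b b : IncidenceAlgebra R X) = 0 := by
  ext u v
  rw [matrixUnit_self_lieBr_apply]
  simp [matrixUnit_self_apply, hab]

theorem IsLieTripleDer.apply_matrixUnit_self_eq_zero
    {L : IncidenceAlgebra R X →ₗ[R] IncidenceAlgebra R X} (hL : IsLieTripleDer L)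
    {a b c : X} (hab : a ≠ b) (hcb : c ≠ b) (hac : a ≠ c) :
    L (matrixUnit b b) a c = 0 := by
  have h := congr($(hL (matrixUnit a a) (matrixUnit b b) (matrixUnit c c)) a c)
  rw [lieBr_matrixUnit_self_of_ne hab] at h
  simp only [IncidenceAlgebra.add_apply, lieBr_matrixUnit_self_apply,
    matrixUnit_self_lieBr_apply] at h
  simpa [lieBr, hab, hcb, hac, hac.symm] using h.symm

end

theorem lieTripleDer_diag_matrixUnit_coeff_general [CommRing R] [Preorder X] [DecidableEq X]
    [LocallyFiniteOrder X]
    (L : IncidenceAlgebra R X →ₗ[R] IncidenceAlgebra R X) (hL : IsLieTripleDer L) :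
    ∀ i x y : X, x ≤ y → x ≠ y → x ≠ i → y ≠ i →
      L (matrixUnit i i) x y = 0 :=
  fun _ _ _ _ hne hxi hyi => hL.apply_matrixUnit_self_eq_zero hxi hyi hne

/-- For a Lie triple derivation `L` of the incidence algebra of a finite
connected pre-ordered set with at least two elements (over a 2-torsion free commutative ring),
the coefficient `C^{ii}_{xy} = L(e_{ii})(x,y)` vanishes whenever `x ≠ i ≠ y` and `x < y`. -/
theorem lieTripleDer_diag_matrixUnit_coeff [CommRing R] [Preorder X] [DecidableEq X]
    [Fintype X] [LocallyFiniteOrder X]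
    (htf : TwoTorsionFree R) (hconn : OrdConnected' X) (hcard : 1 < Fintype.card X)
    (L : IncidenceAlgebra R X →ₗ[R] IncidenceAlgebra R X) (hL : IsLieTripleDer L) :
    ∀ i x y : X, x ≤ y → x ≠ y → x ≠ i → y ≠ i →
      L (matrixUnit i i) x y = 0 :=
  lieTripleDer_diag_matrixUnit_coeff_general L hL
end

section
/- Let X be a finite connected pre-ordered set, R a 2-torsion free commutative ring with unity, and L a Lie triple derivation of I(X,R) with coefficients C^{ij}_{xy} defined by L(e_{ij}) = Σ C^{ij}_{xy} e_{xy}. Then for i < j, L(e_{ij}) = Σ_{x<i} C^{ii}_{xi} e_{xj} + C^{ij}_{ij} e_{ij} + Σ_{y>j} C^{jj}_{jy} e_{iy}. -/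
/-! Applying the triple identity to `(e_ij, e_jj, e_jj)` and to `(e_ij, e_ii, e_ii)`, whose double
brackets are both `e_ij`, pins down the entries of `L(e_ij)` outside row and column `j` (the row-`j`
entries of `L(e_jj)`, moved to row `i`) and outside row and column `i` (the column-`i` entries of
`L(e_ii)`, moved to column `j`). Of the remaining entries, `(i, j)` is the free coefficient and
`(j, i)` matters only when `j ≤ i`; then `(e_ij, e_ji, e_ij)` shows that it is killed by `4`, so it
vanishes in a 2-torsion free ring. -/

open IncidenceAlgebra
open scoped Classical

variable {R X : Type*}

lemma IncidenceAlgebra.sum_apply {𝕜 α ι : Type*} [AddCommMonoid 𝕜] [LE α] (s : Finset ι)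
    (f : ι → IncidenceAlgebra 𝕜 α) (a b : α) : (∑ i ∈ s, f i) a b = ∑ i ∈ s, f i a b := by
  induction s using Finset.cons_induction with
  | empty => rfl
  | cons i s hi ih => rw [Finset.sum_cons, Finset.sum_cons, IncidenceAlgebra.add_apply, ih]

section MatrixUnit
variable [CommRing R] [Preorder X] [DecidableEq X]

lemma matrixUnit_apply (a b u v : X) :
    matrixUnit (R := R) a b u v = if u = a ∧ v = b ∧ a ≤ b then 1 else 0 := rfl

lemma sum_smul_matrixUnit_left_apply [Fintype X] (p : X → Prop) [DecidablePred p]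
    (c : X → R) (b u v : X) :
    (∑ x ∈ Finset.univ.filter p, c x • matrixUnit (R := R) x b) u v
      = if p u ∧ v = b ∧ u ≤ b then c u else 0 := by
  simp only [IncidenceAlgebra.sum_apply, constSMul_apply, matrixUnit_apply, smul_eq_mul, mul_ite,
    mul_one, mul_zero]
  rw [Finset.sum_filter, Finset.sum_eq_single u] <;> aesop

lemma sum_smul_matrixUnit_right_apply [Fintype X] (p : X → Prop) [DecidablePred p]
    (c : X → R) (a u v : X) :
    (∑ y ∈ Finset.univ.filter p, c y • matrixUnit (R := R) a y) u v
      = if p v ∧ u = a ∧ a ≤ v then c v else 0 := by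
  simp only [IncidenceAlgebra.sum_apply, constSMul_apply, matrixUnit_apply, smul_eq_mul, mul_ite,
    mul_one, mul_zero]
  rw [Finset.sum_filter, Finset.sum_eq_single v] <;> aesop

end MatrixUnit

lemma lieBr_neg_left {A : Type*} [Ring A] (f g : A) : lieBr (-f) g = -lieBr f g := by
  simp only [lieBr]; noncomm_ring

lemma lieBr_sub_left {A : Type*} [Ring A] (f g h : A) :
    lieBr (f - g) h = lieBr f h - lieBr g h := by
  simp only [lieBr]; noncomm_ring

section MatrixUnitMul
variable [CommRing R] [Preorder X] [DecidableEq X] [LocallyFiniteOrder X]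

lemma mul_matrixUnit_apply (f : IncidenceAlgebra R X) (a b u v : X) :
    (f * matrixUnit (R := R) a b) u v = if v = b ∧ a ≤ b then f u a else 0 := by
  rw [mul_apply]
  split_ifs with h
  · obtain ⟨rfl, hab⟩ := h
    simp only [matrixUnit_apply, hab, and_true, mul_ite, mul_one, mul_zero, Finset.sum_ite_eq',
      Finset.mem_Icc]
    by_cases hua : u ≤ a
    · simp [hua]
    · simp [hua, apply_eq_zero_of_not_le hua]
  · refine Finset.sum_eq_zero fun x _ => ?_
    rw [matrixUnit_apply, if_neg (fun hc => h ⟨hc.2.1, hc.2.2⟩), mul_zero]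

lemma matrixUnit_mul_apply (f : IncidenceAlgebra R X) (a b u v : X) :
    (matrixUnit (R := R) a b * f) u v = if u = a ∧ a ≤ b then f b v else 0 := by
  rw [mul_apply]
  split_ifs with h
  · obtain ⟨rfl, hab⟩ := h
    simp only [matrixUnit_apply, hab, true_and, and_true, ite_mul, one_mul, zero_mul,
      Finset.sum_ite_eq', Finset.mem_Icc]
    by_cases hbv : b ≤ v
    · simp [hbv]
    · simp [hbv, apply_eq_zero_of_not_le hbv]
  · refine Finset.sum_eq_zero fun x _ => ?_
    rw [matrixUnit_apply, if_neg (fun hc => h ⟨hc.1, hc.2.2⟩), zero_mul]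

lemma matrixUnit_mul_matrixUnit {a b c d : X} (hab : a ≤ b) (hcd : c ≤ d) :
    matrixUnit (R := R) a b * matrixUnit c d = if b = c then matrixUnit a d else 0 := by
  ext u v _
  rw [matrixUnit_mul_apply]
  obtain rfl | hbc := eq_or_ne b c
  · simp [matrixUnit_apply, ite_and, hab, hcd, hab.trans hcd]
  · simp [matrixUnit_apply, hab, hbc]

lemma lieBr_matrixUnit_apply (f : IncidenceAlgebra R X) (a b u v : X) :
    lieBr f (matrixUnit (R := R) a b) u v
      = (if v = b ∧ a ≤ b then f u a else 0) - (if u = a ∧ a ≤ b then f b v else 0) := by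
  rw [lieBr, IncidenceAlgebra.sub_apply, mul_matrixUnit_apply, matrixUnit_mul_apply]

lemma matrixUnit_lieBr_apply (f : IncidenceAlgebra R X) (a b u v : X) :
    lieBr (matrixUnit (R := R) a b) f u v
      = (if u = a ∧ a ≤ b then f b v else 0) - (if v = b ∧ a ≤ b then f u a else 0) := by
  rw [lieBr, IncidenceAlgebra.sub_apply, mul_matrixUnit_apply, matrixUnit_mul_apply]

lemma lieBr_matrixUnit_apply_of_ne (f : IncidenceAlgebra R X) {a b u v : X}
    (hu : u ≠ a) (hv : v ≠ b) : lieBr f (matrixUnit (R := R) a b) u v = 0 := by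
  simp [lieBr_matrixUnit_apply, hu, hv]

variable {i j : X}

lemma lieBr_matrixUnit_diag_right (hij : i ≤ j) (hne : i ≠ j) :
    lieBr (matrixUnit (R := R) i j) (matrixUnit j j) = matrixUnit i j := by
  simp [lieBr, matrixUnit_mul_matrixUnit, hij, hne.symm]

lemma lieBr_matrixUnit_diag_left (hij : i ≤ j) (hne : i ≠ j) :
    lieBr (matrixUnit (R := R) i j) (matrixUnit i i) = -matrixUnit i j := by
  simp [lieBr, matrixUnit_mul_matrixUnit, hij, hne.symm]

lemma lieBr_matrixUnit_matrixUnit_swap (hij : i ≤ j) (hji : j ≤ i) :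
    lieBr (matrixUnit (R := R) i j) (matrixUnit j i) = matrixUnit i i - matrixUnit j j := by
  simp [lieBr, matrixUnit_mul_matrixUnit, hij, hji]

end MatrixUnitMul

namespace IsLieTripleDer
variable [CommRing R] [Preorder X] [DecidableEq X] [LocallyFiniteOrder X]
  {L : IncidenceAlgebra R X →ₗ[R] IncidenceAlgebra R X} {i j : X}

lemma apply_matrixUnit_of_ne_target (hL : IsLieTripleDer L) (hij : i ≤ j) (hne : i ≠ j)
    {u v : X} (hu : u ≠ j) (hv : v ≠ j) :
    L (matrixUnit i j) u v = if u = i then L (matrixUnit j j) j v else 0 := by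
  have h := hL (matrixUnit i j) (matrixUnit j j) (matrixUnit j j)
  rw [lieBr_matrixUnit_diag_right hij hne, lieBr_matrixUnit_diag_right hij hne] at h
  have huv := congrFun (DFunLike.congr_fun h u) v
  rw [IncidenceAlgebra.add_apply, IncidenceAlgebra.add_apply,
    lieBr_matrixUnit_apply_of_ne _ hu hv, lieBr_matrixUnit_apply_of_ne _ hu hv,
    matrixUnit_lieBr_apply] at huv
  simpa [hij, hv] using huv

lemma apply_matrixUnit_of_ne_source (hL : IsLieTripleDer L) (hij : i ≤ j) (hne : i ≠ j)
    {u v : X} (hu : u ≠ i) (hv : v ≠ i) :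
    L (matrixUnit i j) u v = if v = j then L (matrixUnit i i) u i else 0 := by
  have h := hL (matrixUnit i j) (matrixUnit i i) (matrixUnit i i)
  rw [lieBr_matrixUnit_diag_left hij hne, lieBr_neg_left,
    lieBr_matrixUnit_diag_left hij hne, neg_neg] at h
  have huv := congrFun (DFunLike.congr_fun h u) v
  rw [IncidenceAlgebra.add_apply, IncidenceAlgebra.add_apply,
    lieBr_matrixUnit_apply_of_ne _ hu hv, lieBr_matrixUnit_apply_of_ne _ hu hv, lieBr_neg_left,
    IncidenceAlgebra.neg_apply, matrixUnit_lieBr_apply] at huv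
  simpa [hij, hu] using huv

lemma apply_matrixUnit_swap (htf : TwoTorsionFree R) (hL : IsLieTripleDer L) (hij : i ≤ j)
    (hne : i ≠ j) : L (matrixUnit i j) j i = 0 := by
  by_cases hji : j ≤ i
  · have h := hL (matrixUnit i j) (matrixUnit j i) (matrixUnit i j)
    have hsub : lieBr (matrixUnit i i - matrixUnit j j) (matrixUnit (R := R) i j)
        = matrixUnit i j + matrixUnit i j := by
      simp [lieBr, sub_mul, mul_sub, matrixUnit_mul_matrixUnit, hij, hne.symm]
    rw [lieBr_matrixUnit_matrixUnit_swap hij hji, hsub, map_add] at h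
    have hentry := congrFun (DFunLike.congr_fun h j) i
    rw [IncidenceAlgebra.add_apply, IncidenceAlgebra.add_apply, IncidenceAlgebra.add_apply,
      lieBr_matrixUnit_apply_of_ne _ hne.symm hne, lieBr_matrixUnit_apply_of_ne _ hne.symm hne,
      lieBr_sub_left, IncidenceAlgebra.sub_apply, matrixUnit_lieBr_apply,
      matrixUnit_lieBr_apply] at hentry
    simp only [add_zero, zero_add, sub_zero, zero_sub, hne, hne.symm, le_refl, and_true, and_self,
      if_true, if_false] at hentry
    exact htf _ (htf _ (by linear_combination hentry))
  · exact apply_eq_zero_of_not_le hji _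

lemma apply_matrixUnit_eq_zero_of_ne (htf : TwoTorsionFree R) (hL : IsLieTripleDer L)
    (hij : i ≤ j) (hne : i ≠ j) {u v : X} (hu : u ≠ i) (hv : v ≠ j) :
    L (matrixUnit i j) u v = 0 := by
  by_cases huj : u = j
  · subst huj
    obtain rfl | hvi := eq_or_ne v i
    · exact hL.apply_matrixUnit_swap htf hij hne
    · simpa [hv] using hL.apply_matrixUnit_of_ne_source hij hne hu hvi
  · simpa [hu] using hL.apply_matrixUnit_of_ne_target hij hne huj hv

end IsLieTripleDer

theorem lieTripleDer_offDiag_matrixUnit_general [CommRing R] [Preorder X] [DecidableEq X]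
    [Fintype X] [LocallyFiniteOrder X]
    (htf : TwoTorsionFree R)
    (L : IncidenceAlgebra R X →ₗ[R] IncidenceAlgebra R X) (hL : IsLieTripleDer L) :
    ∀ i j : X, i ≤ j → i ≠ j →
      L (matrixUnit i j) =
        (∑ x ∈ Finset.univ.filter (fun x : X => x ≤ i ∧ x ≠ i),
            L (matrixUnit i i) x i • matrixUnit x j)
        + L (matrixUnit i j) i j • matrixUnit i j
        + ∑ y ∈ Finset.univ.filter (fun y : X => j ≤ y ∧ y ≠ j),
            L (matrixUnit j j) j y • matrixUnit i y := by
  intro i j hij hne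
  ext u v _
  rw [IncidenceAlgebra.add_apply, IncidenceAlgebra.add_apply, sum_smul_matrixUnit_left_apply,
    sum_smul_matrixUnit_right_apply, constSMul_apply, matrixUnit_apply, smul_eq_mul]
  by_cases hu : u = i <;> by_cases hv : v = j
  · subst hu hv
    simp [hij]
  · subst hu
    rw [hL.apply_matrixUnit_of_ne_target hij hne hne hv, if_pos rfl]
    by_cases hjv : j ≤ v
    · simp [hjv, hv, hij.trans hjv]
    · simp [hjv, hv, apply_eq_zero_of_not_le hjv]
  · subst hv
    rw [hL.apply_matrixUnit_of_ne_source hij hne hu hne.symm, if_pos rfl]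
    by_cases hui : u ≤ i
    · simp [hui, hu, hui.trans hij]
    · simp [hui, hu, apply_eq_zero_of_not_le hui]
  · simp [hu, hv, hL.apply_matrixUnit_eq_zero_of_ne htf hij hne hu hv]

/-- Form of `L(e_{ij})` for `i < j`:
`L(e_{ij}) = Σ_{x<i} C^{ii}_{xi} e_{xj} + C^{ij}_{ij} e_{ij} + Σ_{y>j} C^{jj}_{jy} e_{iy}`. -/
theorem lieTripleDer_offDiag_matrixUnit [CommRing R] [Preorder X] [DecidableEq X]
    [Fintype X] [LocallyFiniteOrder X]
    (htf : TwoTorsionFree R) (hconn : OrdConnected' X)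
    (L : IncidenceAlgebra R X →ₗ[R] IncidenceAlgebra R X) (hL : IsLieTripleDer L) :
    ∀ i j : X, i ≤ j → i ≠ j →
      L (matrixUnit i j) =
        (∑ x ∈ Finset.univ.filter (fun x : X => x ≤ i ∧ x ≠ i),
            L (matrixUnit i i) x i • matrixUnit x j)
        + L (matrixUnit i j) i j • matrixUnit i j
        + ∑ y ∈ Finset.univ.filter (fun y : X => j ≤ y ∧ y ≠ j),
            L (matrixUnit j j) j y • matrixUnit i y :=
  lieTripleDer_offDiag_matrixUnit_general htf L hL
end
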